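/- arXiv:1702.00110 — 10 statements merged into one kernel-verified Lean document; each statement's English description precedes it below -/
import Mathlib

section
/- Let Φ ∈ ℝ^{m×n} and c ∈ ℝ^m. If x̂ and x̄ both minimize ‖x‖₀ over the set {x ∈ ℝ^n : Φx = c} and have the same support, i.e., {i : x̂_i ≠ 0} = {i : x̄_i ≠ 0}, then x̂ = x̄. -/
/-- `‖x‖₀`: the number of nonzero components of `x`. -/
noncomputable def norm0 {n : ℕ} (x : Fin n → ℝ) : ℕ :=
  (Finset.univ.filter (fun i => x i ≠ 0)).card

/-- two minimizers of `‖·‖₀` over `{x | Φx = c}` with the same support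
are equal. -/
theorem stmt_3 {m n : ℕ} (Φ : Matrix (Fin m) (Fin n) ℝ) (c : Fin m → ℝ)
    (xh xb : Fin n → ℝ)
    (hfeash : Φ.mulVec xh = c)
    (hminh : ∀ x : Fin n → ℝ, Φ.mulVec x = c → norm0 xh ≤ norm0 x)
    (hfeasb : Φ.mulVec xb = c)
    (hminb : ∀ x : Fin n → ℝ, Φ.mulVec x = c → norm0 xb ≤ norm0 x)
    (hsupp : {i : Fin n | xh i ≠ 0} = {i : Fin n | xb i ≠ 0}) :
    xh = xb := by
  have hsupp' : ∀ j, xh j ≠ 0 ↔ xb j ≠ 0 := fun j => Set.ext_iff.mp hsupp j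
  by_contra hne
  obtain ⟨i, hi⟩ : ∃ i, xh i ≠ xb i := by
    by_contra h; push_neg at h; exact hne (funext h)
  have hdi : xh i - xb i ≠ 0 := sub_ne_zero.mpr hi
  have hxhi : xh i ≠ 0 := by
    intro h0
    have hb0 : xb i = 0 := by
      by_contra hb; exact ((hsupp' i).mpr hb) h0
    exact hi (h0.trans hb0.symm)
  set t : ℝ := xh i / (xh i - xb i) with ht
  set y : Fin n → ℝ := xh + t • (xb - xh) with hy
  have hfeasy : Φ.mulVec y = c := by
    rw [hy, Matrix.mulVec_add, Matrix.mulVec_smul, Matrix.mulVec_sub, hfeash, hfeasb]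
    simp
  have hyi : y i = 0 := by
    simp only [hy, ht, Pi.add_apply, Pi.smul_apply, Pi.sub_apply, smul_eq_mul]
    field_simp
    ring
  have hsub : Finset.univ.filter (fun j => y j ≠ 0) ⊂
      Finset.univ.filter (fun j => xh j ≠ 0) := by
    constructor
    · intro j hj
      simp only [Finset.mem_filter, Finset.mem_univ, true_and] at hj ⊢
      intro hxh0
      have hxb0 : xb j = 0 := by
        by_contra hb; exact ((hsupp' j).mpr hb) hxh0
      apply hj
      simp [hy, hxh0, hxb0]
    · intro h
      have := h (by simp [hxhi] : i ∈ Finset.univ.filter (fun j => xh j ≠ 0))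
      simp only [Finset.mem_filter] at this
      exact this.2 hyi
  have hlt : norm0 y < norm0 xh := Finset.card_lt_card hsub
  exact absurd (hminh y hfeasy) (not_le.mpr hlt)
end

section
/- Let Φ ∈ ℝ^{m×n} and c ∈ ℝ^m. Then the set of minimizers of ‖x‖₀ over {x ∈ ℝ^n : Φx = c} is a finite set. -/
/-- the set of minimizers of `‖·‖₀` over `{x | Φx = c}` is finite. -/
theorem stmt_4 {m n : ℕ} (Φ : Matrix (Fin m) (Fin n) ℝ) (c : Fin m → ℝ) :
    Set.Finite {x : Fin n → ℝ | Φ.mulVec x = c ∧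
      ∀ y : Fin n → ℝ, Φ.mulVec y = c → norm0 x ≤ norm0 y} := by
  have hinj : Set.InjOn (fun x : Fin n → ℝ => Finset.univ.filter (fun i => x i ≠ 0))
      {x : Fin n → ℝ | Φ.mulVec x = c ∧
        ∀ y : Fin n → ℝ, Φ.mulVec y = c → norm0 x ≤ norm0 y} := by
    rintro x ⟨hx, hxm⟩ y ⟨hy, _⟩ hS
    have hS' : Finset.univ.filter (fun j => x j ≠ 0) = Finset.univ.filter (fun j => y j ≠ 0) := hS
    by_contra hne
    obtain ⟨i, hi⟩ : ∃ i, x i ≠ y i := Function.ne_iff.mp hne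
    have hxi : x i ≠ 0 := by
      intro h0
      have hyi : y i ≠ 0 := fun h => hi (h0.trans h.symm)
      have hmem : i ∈ Finset.univ.filter (fun j => y j ≠ 0) := by simp [hyi]
      rw [← hS'] at hmem
      simp [h0] at hmem
    have hsub : x i - y i ≠ 0 := sub_ne_zero.mpr hi
    set t := x i / (x i - y i) with ht
    set z := fun j => x j + t * (y j - x j) with hz
    have hzi : z i = 0 := by
      simp only [hz, ht]
      field_simp
      ring
    have hΦz : Φ.mulVec z = c := by
      have hzeq : z = x + t • (y - x) := by
        funext j; simp [hz, smul_eq_mul]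
      rw [hzeq, Matrix.mulVec_add, Matrix.mulVec_smul, Matrix.mulVec_sub, hx, hy]
      simp
    have hle := hxm z hΦz
    have hsubset : Finset.univ.filter (fun j => z j ≠ 0) ⊆
        (Finset.univ.filter (fun j => x j ≠ 0)).erase i := by
      intro j hj
      simp only [Finset.mem_filter, Finset.mem_univ, true_and] at hj
      rw [Finset.mem_erase]
      constructor
      · rintro rfl; exact hj hzi
      · simp only [Finset.mem_filter, Finset.mem_univ, true_and]
        intro hxj
        have hyj : y j = 0 := by
          by_contra hyj
          have hmem : j ∈ Finset.univ.filter (fun k => y k ≠ 0) := by simp [hyj]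
          rw [← hS'] at hmem
          simp [hxj] at hmem
        apply hj
        simp [hz, hxj, hyj]
    have hlt : norm0 z < norm0 x := by
      calc norm0 z ≤ ((Finset.univ.filter (fun j => x j ≠ 0)).erase i).card :=
            Finset.card_le_card hsubset
        _ < (Finset.univ.filter (fun j => x j ≠ 0)).card :=
            Finset.card_erase_lt_of_mem (by simp [hxi])
        _ = norm0 x := rfl
    exact absurd hle (not_le.mpr hlt)
  exact Set.Finite.of_finite_image (Set.toFinite _) hinj
end

section
/- Let Φ ∈ ℝ^{m×n} and c ∈ ℝ^m, and suppose the set {x ∈ ℝ^n : Φx = c} is nonempty. Let s be the minimum of ‖x‖₀ over this set. Then the set of minimizers of ‖x‖₀ over {x ∈ ℝ^n : Φx = c} has cardinality at most the binomial coefficient C(n, s). -/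
open Function Set

section
variable {ι K : Type*} [Field K]

theorem exists_lineMap_support_ssubset {x y : ι → K} (hxy : x ≠ y)
    (hsupp : support x = support y) : ∃ t : K, support (AffineMap.lineMap x y t) ⊂ support x := by
  obtain ⟨i, hi⟩ := Function.ne_iff.mp hxy
  have hxi : x i ≠ 0 := by
    intro hx0
    have hy0 : y i = 0 := notMem_support.1 (hsupp ▸ notMem_support.2 hx0)
    exact hi (hx0.trans hy0.symm)
  refine ⟨x i / (x i - y i), (ssubset_iff_of_subset ?_).2 ⟨i, hxi, ?_⟩⟩
  · rw [AffineMap.lineMap_apply_module]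
    refine (support_add _ _).trans (union_subset (support_smul_subset_right _ _) ?_)
    exact hsupp ▸ support_smul_subset_right _ _
  · have : x i - y i ≠ 0 := sub_ne_zero.mpr hi
    simp only [mem_support, not_not, AffineMap.lineMap_apply_module, Pi.add_apply,
      Pi.smul_apply, smul_eq_mul]
    field_simp
    ring

def sparsest (A : AffineSubspace K (ι → K)) : Set (ι → K) :=
  {x | x ∈ A ∧ ∀ y ∈ A, (support x).ncard ≤ (support y).ncard}

variable [Finite ι]

theorem injOn_support_sparsest (A : AffineSubspace K (ι → K)) : InjOn support (sparsest A) := by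
  rintro x ⟨hxA, hxmin⟩ y ⟨hyA, -⟩ hsupp
  by_contra hxy
  obtain ⟨t, ht⟩ := exists_lineMap_support_ssubset hxy hsupp
  exact (hxmin _ (AffineMap.lineMap_mem t hxA hyA)).not_gt (ncard_lt_ncard ht)

theorem ncard_sparsest_le_choose (A : AffineSubspace K (ι → K)) {s : ℕ}
    (hs : IsLeast ((fun x => (support x).ncard) '' (A : Set (ι → K))) s) :
    (sparsest A).ncard ≤ (Nat.card ι).choose s := by
  obtain ⟨x₀, hx₀A, hx₀s⟩ := hs.1
  calc (sparsest A).ncard = (support '' sparsest A).ncard :=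
        (injOn_support_sparsest A).ncard_image.symm
    _ ≤ {S ⊆ (univ : Set ι) | S.ncard = s}.ncard := by
        refine ncard_le_ncard ?_ (toFinite _)
        rintro _ ⟨x, ⟨hxA, hxmin⟩, rfl⟩
        exact ⟨subset_univ _, le_antisymm (hx₀s ▸ hxmin x₀ hx₀A) (hs.2 ⟨x, hxA, rfl⟩)⟩
    _ = (Nat.card ι).choose s := by
        rw [ncard_powerset_ncard (toFinite _), ncard_univ]

end

theorem norm0_eq_ncard_support {n : ℕ} (x : Fin n → ℝ) : norm0 x = (support x).ncard := by
  rw [norm0, ← ncard_coe_finset, Finset.coe_filter_univ]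
  rfl

theorem stmt_5_general {m n : ℕ} (Φ : Matrix (Fin m) (Fin n) ℝ) (c : Fin m → ℝ)
    (s : ℕ)
    (hs : IsLeast {k : ℕ | ∃ x : Fin n → ℝ, Φ.mulVec x = c ∧ norm0 x = k} s) :
    Set.ncard {x : Fin n → ℝ | Φ.mulVec x = c ∧
      ∀ y : Fin n → ℝ, Φ.mulVec y = c → norm0 x ≤ norm0 y} ≤ n.choose s := by
  set A : AffineSubspace ℝ (Fin n → ℝ) := (affineSpan ℝ {c}).comap Φ.mulVecLin.toAffineMap
  have hA : ∀ x, x ∈ A ↔ Φ.mulVec x = c := by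
    simp [A, AffineSubspace.mem_comap, AffineSubspace.mem_affineSpan_singleton]
  have hs' : IsLeast ((fun x => (support x).ncard) '' (A : Set (Fin n → ℝ))) s := by
    simpa [Set.image, hA, norm0_eq_ncard_support] using hs
  simpa [sparsest, hA, norm0_eq_ncard_support] using ncard_sparsest_le_choose A hs'

/-- if `s` is the minimum of `‖·‖₀` over the nonempty set `{x | Φx = c}`,
then the set of minimizers has cardinality at most `C(n, s)`. -/
theorem stmt_5 {m n : ℕ} (Φ : Matrix (Fin m) (Fin n) ℝ) (c : Fin m → ℝ)
    (hne : ∃ x : Fin n → ℝ, Φ.mulVec x = c) (s : ℕ)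
    (hs : IsLeast {k : ℕ | ∃ x : Fin n → ℝ, Φ.mulVec x = c ∧ norm0 x = k} s) :
    Set.ncard {x : Fin n → ℝ | Φ.mulVec x = c ∧
      ∀ y : Fin n → ℝ, Φ.mulVec y = c → norm0 x ≤ norm0 y} ≤ n.choose s :=
  stmt_5_general Φ c s hs
end

section
/- The set of minimizers of ‖x‖₀ over the set {x ∈ ℝ^n : |Φx| = b} is a finite set. -/
section

open Function Matrix

lemma eq_of_abs_eq_of_sign_eq {α : Type*} [Ring α] [LinearOrder α] [IsStrictOrderedRing α]
    {a b : α} (habs : |a| = |b|) (hsign : SignType.sign a = SignType.sign b) : a = b := by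
  rw [← sign_mul_abs a, ← sign_mul_abs b, habs, hsign]

lemma exists_support_add_smul_sub_ssubset {ι K : Type*} [Field K] {x y : ι → K} (hxy : x ≠ y)
    (hsupp : support y ⊆ support x) : ∃ t : K, support (x + t • (y - x)) ⊂ support x := by
  obtain ⟨i, hi⟩ := ne_iff.mp hxy
  have hxi : x i ≠ 0 := fun h0 => hi (h0.trans (notMem_support.mp
    fun hy => mem_support.mp (hsupp hy) h0).symm)
  refine ⟨x i / (x i - y i), ?_, fun hsub => ?_⟩
  · refine support_subset_iff.mpr fun j hj => ?_
    intro hxj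
    have hyj : y j = 0 := notMem_support.mp fun hy => hsupp hy hxj
    simp [hxj, hyj] at hj
  · have hd : x i - y i ≠ 0 := sub_ne_zero.mpr hi
    apply hsub hxi
    simp only [Pi.add_apply, Pi.smul_apply, Pi.sub_apply, smul_eq_mul]
    field_simp
    ring

lemma norm0_lt_norm0_of_support_ssubset {n : ℕ} {x z : Fin n → ℝ} (h : support z ⊂ support x) :
    norm0 z < norm0 x := by
  classical
  unfold norm0
  apply Finset.card_lt_card
  rw [← Finset.coe_ssubset]
  simpa [support] using h

lemma eq_of_mulVec_eq_of_support_subset {m n : ℕ} {Φ : Matrix (Fin m) (Fin n) ℝ}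
    {x y : Fin n → ℝ} (hmin : ∀ z, Φ *ᵥ z = Φ *ᵥ x → norm0 x ≤ norm0 z)
    (hΦ : Φ *ᵥ y = Φ *ᵥ x) (hsupp : support y ⊆ support x) : x = y := by
  by_contra hxy
  obtain ⟨t, ht⟩ := exists_support_add_smul_sub_ssubset hxy hsupp
  have hz : Φ *ᵥ (x + t • (y - x)) = Φ *ᵥ x := by
    simp [Matrix.mulVec_add, Matrix.mulVec_smul, Matrix.mulVec_sub, hΦ]
  exact (norm0_lt_norm0_of_support_ssubset ht).not_ge (hmin _ hz)

end

theorem stmt_6_general {m n : ℕ} (Φ : Matrix (Fin m) (Fin n) ℝ)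
    (b : Fin m → ℝ) :
    Set.Finite {x : Fin n → ℝ | (∀ j, |Φ.mulVec x j| = b j) ∧
      ∀ y : Fin n → ℝ, (∀ j, |Φ.mulVec y j| = b j) → norm0 x ≤ norm0 y} := by
  let pattern : (Fin n → ℝ) → Set (Fin n) × (Fin m → SignType) :=
    fun x => (Function.support x, fun j => SignType.sign (Φ.mulVec x j))
  refine Set.Finite.of_finite_image (f := pattern) (Set.toFinite _) ?_
  rintro x ⟨hx, hxmin⟩ y ⟨hy, -⟩ hxy
  obtain ⟨hsupp, hsign⟩ := Prod.ext_iff.mp hxy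
  have hΦ : Φ.mulVec y = Φ.mulVec x := funext fun j =>
    eq_of_abs_eq_of_sign_eq ((hy j).trans (hx j).symm) (congrFun hsign j).symm
  refine eq_of_mulVec_eq_of_support_subset (fun z hz => hxmin z fun j => ?_) hΦ hsupp.ge
  rw [hz, hx]

/-- the set of minimizers of `‖·‖₀` over `{x | |Φx| = b}` is finite. -/
theorem stmt_6 {m n : ℕ} (hmn : m ≤ n) (Φ : Matrix (Fin m) (Fin n) ℝ)
    (hrank : Φ.rank = m) (b : Fin m → ℝ) (hb : ∀ j, 0 ≤ b j) :
    Set.Finite {x : Fin n → ℝ | (∀ j, |Φ.mulVec x j| = b j) ∧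
      ∀ y : Fin n → ℝ, (∀ j, |Φ.mulVec y j| = b j) → norm0 x ≤ norm0 y} :=
  stmt_6_general Φ b
end

section
/- Let Φ ∈ ℝ^{m×n} and c ∈ ℝ^m. Suppose the set {x ∈ ℝ^n : Φx = c} is nonempty and that every minimizer of ‖x‖₀ over it has exactly s nonzero components, where 1 ≤ s ≤ m. Define c₀ := max over all index sets I ⊆ {1,…,n} with #I = s such that Φ_I has full column rank of max_{i ∈ I} |((Φ_Iᵀ Φ_I)^{−1} Φ_Iᵀ c)_i| (this collection of index sets is nonempty). Then every minimizer x̂ of ‖x‖₀ over {x : Φx = c} satisfies ‖x̂‖_∞ ≤ c₀; consequently, the set of minimizers of ‖x‖₀ over {x : Φx = c} coincides with the set of minimizers of ‖x‖₀ over {x : Φx = c, ‖x‖_∞ ≤ c₀}. -/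
open Matrix

/-- The submatrix `Φ_I` of `Φ` formed by the columns indexed by `I`. -/
def subCols {m n : ℕ} (Φ : Matrix (Fin m) (Fin n) ℝ) (I : Finset (Fin n)) :
    Matrix (Fin m) ↥I ℝ :=
  Matrix.of fun j i => Φ j i.val

/-- The vector `(Φ_Iᵀ Φ_I)⁻¹ Φ_Iᵀ c`. -/
noncomputable def lsVec {m n : ℕ} (Φ : Matrix (Fin m) (Fin n) ℝ) (I : Finset (Fin n))
    (c : Fin m → ℝ) : ↥I → ℝ :=
  ((subCols Φ I)ᵀ * subCols Φ I)⁻¹ *ᵥ ((subCols Φ I)ᵀ *ᵥ c)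

/-! A minimizer `x` of `‖·‖₀` on `{Φx = c}` uses linearly independent columns: otherwise a
nonzero kernel vector `v` supported in `supp x` exists, and `x - t v` with `t = x i / v i`
(for some `v i ≠ 0`) is a sparser solution. Hence `Φ_I` with `I = supp x` has full column
rank and `x|_I` is the unique solution of `Φ_I u = c`, i.e. `x|_I = (Φ_Iᵀ Φ_I)⁻¹ Φ_Iᵀ c`.
Since `#I = s`, the sup norm of `x` is bounded by one of the numbers whose maximum is `c₀`.
As every global minimizer is feasible for the box-constrained problem, the two minimizer
sets agree. -/

theorem setOf_minimizers_eq_of_minimizers_mem {α β : Type*} [LinearOrder β] [WellFoundedLT β]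
    (f : α → β) (P Q : α → Prop) (hQ : ∀ x, P x → (∀ y, P y → f x ≤ f y) → Q x) :
    {x | P x ∧ ∀ y, P y → f x ≤ f y} = {x | (P x ∧ Q x) ∧ ∀ y, P y ∧ Q y → f x ≤ f y} := by
  ext x
  refine ⟨fun ⟨hx, hmin⟩ => ⟨⟨hx, hQ x hx hmin⟩, fun y hy => hmin y hy.1⟩, ?_⟩
  rintro ⟨⟨hx, -⟩, hmin⟩
  set z := Function.argminOn f {y | P y} ⟨x, hx⟩
  have hz : P z := Function.argminOn_mem f {y | P y} ⟨x, hx⟩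
  have hzmin : ∀ y, P y → f z ≤ f y := fun y hy => Function.argminOn_le f {y | P y} hy
  exact ⟨hx, fun y hy => (hmin z ⟨hz, hQ z hz hzmin⟩).trans (hzmin y hy)⟩

theorem Matrix.inv_transpose_mul_self_mulVec_transpose_mulVec_mulVec {R m ι : Type*} [Field R]
    [LinearOrder R] [IsStrictOrderedRing R] [Fintype m] [Fintype ι] [DecidableEq ι]
    (A : Matrix m ι R) (hA : LinearIndependent R A.col) (u : ι → R) :
    (Aᵀ * A)⁻¹ *ᵥ (Aᵀ *ᵥ (A *ᵥ u)) = u := by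
  have hinj : Function.Injective (Aᵀ * A).mulVec := by
    rw [← coe_mulVecLin, ← LinearMap.ker_eq_bot, ker_mulVecLin_transpose_mul_self,
      LinearMap.ker_eq_bot, coe_mulVecLin, mulVec_injective_iff]
    exact hA
  have hdet : IsUnit (Aᵀ * A).det :=
    (isUnit_iff_isUnit_det _).mp (mulVec_injective_iff_isUnit.mp hinj)
  rw [mulVec_mulVec, mulVec_mulVec, Matrix.mul_assoc, nonsing_inv_mul _ hdet, one_mulVec]

section Sparse

variable {m n : ℕ}

noncomputable def support0 (x : Fin n → ℝ) : Finset (Fin n) :=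
  Finset.univ.filter (fun i => x i ≠ 0)

@[simp]
theorem mem_support0 {x : Fin n → ℝ} {i : Fin n} : i ∈ support0 x ↔ x i ≠ 0 := by
  simp [support0]

theorem norm0_sub_smul_lt {x v : Fin n → ℝ} (hv : support0 v ⊆ support0 x) (hv0 : v ≠ 0) :
    ∃ t : ℝ, norm0 (x - t • v) < norm0 x := by
  obtain ⟨i, hi⟩ := Function.ne_iff.mp hv0
  refine ⟨x i / v i, ?_⟩
  have hsub : support0 (x - (x i / v i) • v) ⊆ (support0 x).erase i := by
    intro k hk
    rw [mem_support0] at hk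
    refine Finset.mem_erase.mpr ⟨?_, ?_⟩
    · rintro rfl
      exact hk (by simp [div_mul_cancel₀ _ hi])
    · by_contra hkx
      have hxk : x k = 0 := by simpa using hkx
      have hvk : v k = 0 := by simpa using mt (@hv k) hkx
      simp [hxk, hvk] at hk
  calc norm0 (x - (x i / v i) • v) ≤ ((support0 x).erase i).card := Finset.card_le_card hsub
    _ < (support0 x).card := Finset.card_erase_lt_of_mem (hv (mem_support0.mpr hi))

noncomputable def zeroExtend (I : Finset (Fin n)) (g : ↥I → ℝ) : Fin n → ℝ :=
  fun k => if h : k ∈ I then g ⟨k, h⟩ else 0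

theorem zeroExtend_coe (I : Finset (Fin n)) (g : ↥I → ℝ) (i : ↥I) :
    zeroExtend I g i = g i := by
  simp [zeroExtend]

theorem support0_zeroExtend_subset (I : Finset (Fin n)) (g : ↥I → ℝ) :
    support0 (zeroExtend I g) ⊆ I := by
  intro k hk
  by_contra hkI
  simp [zeroExtend, hkI] at hk

theorem zeroExtend_restrict {I : Finset (Fin n)} {x : Fin n → ℝ} (hx : support0 x ⊆ I) :
    zeroExtend I (fun i : ↥I => x i) = x := by
  funext k
  by_cases hk : k ∈ I
  · simp [zeroExtend, hk]
  · have hxk : x k = 0 := by simpa using mt (@hx k) hk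
    simp [zeroExtend, hk, hxk]

theorem subCols_mulVec (Φ : Matrix (Fin m) (Fin n) ℝ) (I : Finset (Fin n)) (g : ↥I → ℝ) :
    subCols Φ I *ᵥ g = Φ *ᵥ zeroExtend I g := by
  funext j
  simp only [mulVec, dotProduct, subCols, of_apply]
  rw [← Finset.sum_subset (Finset.subset_univ I), ← Finset.sum_coe_sort I]
  · simp [zeroExtend_coe]
  · intro k _ hk
    simp [zeroExtend, hk]

theorem linearIndependent_col_subCols_support0 {Φ : Matrix (Fin m) (Fin n) ℝ} {c : Fin m → ℝ}
    {x : Fin n → ℝ}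
    (hx : Φ *ᵥ x = c) (hmin : ∀ y, Φ *ᵥ y = c → norm0 x ≤ norm0 y) :
    LinearIndependent ℝ (subCols Φ (support0 x)).col := by
  rw [← mulVec_injective_iff, ← coe_mulVecLin, ← LinearMap.ker_eq_bot, LinearMap.ker_eq_bot']
  intro g hg
  by_contra hg0
  have hv0 : zeroExtend (support0 x) g ≠ 0 := fun h =>
    hg0 (funext fun i => by simpa [zeroExtend_coe] using congr_fun h i)
  obtain ⟨t, ht⟩ := norm0_sub_smul_lt (support0_zeroExtend_subset _ g) hv0
  have hker : Φ *ᵥ zeroExtend (support0 x) g = 0 := by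
    rw [← subCols_mulVec]
    exact hg
  exact (hmin _ (by rw [mulVec_sub, mulVec_smul, hker, smul_zero, sub_zero, hx])).not_gt ht

theorem norm_le_iSup_abs_of_support0_subset {I : Finset (Fin n)} {x : Fin n → ℝ}
    (hx : support0 x ⊆ I) : ‖x‖ ≤ ⨆ i : ↥I, |x i| := by
  have hbdd : BddAbove (Set.range fun i : ↥I => |x i|) := (Set.finite_range _).bddAbove
  rw [pi_norm_le_iff_of_nonneg (Real.iSup_nonneg fun _ => abs_nonneg _)]
  intro k
  by_cases hk : k ∈ I
  · exact le_ciSup (f := fun i : ↥I => |x i|) hbdd ⟨k, hk⟩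
  · have hxk : x k = 0 := by simpa using mt (@hx k) hk
    simpa [hxk] using Real.iSup_nonneg fun i : ↥I => abs_nonneg (x i)

theorem norm_le_iSup_abs_lsVec_support0 {Φ : Matrix (Fin m) (Fin n) ℝ} {c : Fin m → ℝ}
    {x : Fin n → ℝ} (hx : Φ *ᵥ x = c) (hmin : ∀ y, Φ *ᵥ y = c → norm0 x ≤ norm0 y) :
    ‖x‖ ≤ ⨆ i : ↥(support0 x), |lsVec Φ (support0 x) c i| := by
  have hsol : subCols Φ (support0 x) *ᵥ (fun i : ↥(support0 x) => x i) = c := by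
    rw [subCols_mulVec, zeroExtend_restrict subset_rfl, hx]
  have hls : lsVec Φ (support0 x) c = fun i : ↥(support0 x) => x i := by
    rw [lsVec, ← hsol, inv_transpose_mul_self_mulVec_transpose_mulVec_mulVec _
      (linearIndependent_col_subCols_support0 hx hmin)]
  rw [hls]
  exact norm_le_iSup_abs_of_support0_subset subset_rfl

end Sparse

theorem stmt_7_general {m n : ℕ} (Φ : Matrix (Fin m) (Fin n) ℝ) (c : Fin m → ℝ)
    (s : ℕ)
    (hmins : ∀ x : Fin n → ℝ, Φ.mulVec x = c →
      (∀ y : Fin n → ℝ, Φ.mulVec y = c → norm0 x ≤ norm0 y) → norm0 x = s)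
    (c₀ : ℝ)
    (hc₀ : IsGreatest {r : ℝ | ∃ I : Finset (Fin n), I.card = s ∧
      LinearIndependent ℝ (fun i : ↥I => fun j : Fin m => Φ j i.val) ∧
      r = ⨆ i : ↥I, |lsVec Φ I c i|} c₀) :
    (∀ x : Fin n → ℝ, Φ.mulVec x = c →
      (∀ y : Fin n → ℝ, Φ.mulVec y = c → norm0 x ≤ norm0 y) → ‖x‖ ≤ c₀) ∧
    {x : Fin n → ℝ | Φ.mulVec x = c ∧
        ∀ y : Fin n → ℝ, Φ.mulVec y = c → norm0 x ≤ norm0 y} =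
      {x : Fin n → ℝ | (Φ.mulVec x = c ∧ ‖x‖ ≤ c₀) ∧
        ∀ y : Fin n → ℝ, (Φ.mulVec y = c ∧ ‖y‖ ≤ c₀) → norm0 x ≤ norm0 y} := by
  have hbound : ∀ x : Fin n → ℝ, Φ *ᵥ x = c →
      (∀ y : Fin n → ℝ, Φ *ᵥ y = c → norm0 x ≤ norm0 y) → ‖x‖ ≤ c₀ := fun x hx hmin =>
    (norm_le_iSup_abs_lsVec_support0 hx hmin).trans
      (hc₀.2 ⟨support0 x, hmins x hx hmin, linearIndependent_col_subCols_support0 hx hmin, rfl⟩)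
  exact ⟨hbound, setOf_minimizers_eq_of_minimizers_mem norm0 _ _ hbound⟩

/-- if every minimizer of `‖·‖₀` over the nonempty set `{x | Φx = c}`
has exactly `s` nonzero components (`1 ≤ s ≤ m`), and `c₀` is the maximum, over index
sets `I` of cardinality `s` whose columns `Φ_I` are linearly independent, of
`max_{i ∈ I} |((Φ_Iᵀ Φ_I)⁻¹ Φ_Iᵀ c)_i|`, then every minimizer `x` satisfies
`‖x‖_∞ ≤ c₀`, and the minimizers over `{x | Φx = c}` coincide with the minimizers
over `{x | Φx = c, ‖x‖_∞ ≤ c₀}`. -/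
theorem stmt_7 {m n : ℕ} (Φ : Matrix (Fin m) (Fin n) ℝ) (c : Fin m → ℝ)
    (hne : ∃ x : Fin n → ℝ, Φ.mulVec x = c)
    (s : ℕ) (hs1 : 1 ≤ s) (hsm : s ≤ m)
    (hmins : ∀ x : Fin n → ℝ, Φ.mulVec x = c →
      (∀ y : Fin n → ℝ, Φ.mulVec y = c → norm0 x ≤ norm0 y) → norm0 x = s)
    (c₀ : ℝ)
    (hc₀ : IsGreatest {r : ℝ | ∃ I : Finset (Fin n), I.card = s ∧
      LinearIndependent ℝ (fun i : ↥I => fun j : Fin m => Φ j i.val) ∧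
      r = ⨆ i : ↥I, |lsVec Φ I c i|} c₀) :
    (∀ x : Fin n → ℝ, Φ.mulVec x = c →
      (∀ y : Fin n → ℝ, Φ.mulVec y = c → norm0 x ≤ norm0 y) → ‖x‖ ≤ c₀) ∧
    {x : Fin n → ℝ | Φ.mulVec x = c ∧
        ∀ y : Fin n → ℝ, Φ.mulVec y = c → norm0 x ≤ norm0 y} =
      {x : Fin n → ℝ | (Φ.mulVec x = c ∧ ‖x‖ ≤ c₀) ∧
        ∀ y : Fin n → ℝ, (Φ.mulVec y = c ∧ ‖y‖ ≤ c₀) → norm0 x ≤ norm0 y} :=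
  stmt_7_general Φ c s hmins c₀ hc₀
end

section
/- Suppose the set {x ∈ ℝ^n : |Φx| = b} is nonempty and every minimizer of ‖x‖₀ over it has exactly s nonzero components, where 1 ≤ s ≤ m. For each ε ∈ {−1,1}^m define c₀^ε := max over all index sets I ⊆ {1,…,n} with #I = s such that Φ_I has full column rank of max_{i ∈ I} |((Φ_Iᵀ Φ_I)^{−1} Φ_Iᵀ b_ε)_i|, and set c₀ := max_{ε ∈ {−1,1}^m} c₀^ε. Then every minimizer x̂ of ‖x‖₀ over {x : |Φx| = b} satisfies ‖x̂‖_∞ ≤ c₀; consequently, the set of minimizers of ‖x‖₀ over {x : |Φx| = b} coincides with the set of minimizers of ‖x‖₀ over {x : |Φx| = b, ‖x‖_∞ ≤ c₀}. -/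
open Matrix

private lemma isUnit_gram {m n : ℕ} (Φ : Matrix (Fin m) (Fin n) ℝ) (I : Finset (Fin n))
    (hli : LinearIndependent ℝ (fun i : ↥I => fun j : Fin m => Φ j i.val)) :
    IsUnit ((subCols Φ I)ᵀ * subCols Φ I) := by
  rw [← Matrix.mulVec_injective_iff_isUnit]
  have h1 : Function.Injective (subCols Φ I).mulVec := by
    rw [Matrix.mulVec_injective_iff]; exact hli
  have h2 : LinearMap.ker ((subCols Φ I)ᵀ * subCols Φ I).mulVecLin =
      LinearMap.ker (subCols Φ I).mulVecLin := Matrix.ker_mulVecLin_transpose_mul_self _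
  have : Function.Injective ((subCols Φ I)ᵀ * subCols Φ I).mulVecLin := by
    rw [← LinearMap.ker_eq_bot, h2, LinearMap.ker_eq_bot]; exact h1
  exact this

/-- if every minimizer of `‖·‖₀` over the nonempty set `{x | |Φx| = b}`
has exactly `s` nonzero components (`1 ≤ s ≤ m`), and `c₀ = max_{ε ∈ {−1,1}^m} c₀^ε`
where `c₀^ε` is the max, over index sets `I` of cardinality `s` with `Φ_I` of full
column rank, of `max_{i ∈ I} |((Φ_Iᵀ Φ_I)⁻¹ Φ_Iᵀ b_ε)_i|`, then every minimizer `x`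
satisfies `‖x‖_∞ ≤ c₀`, and the minimizers over `{x | |Φx| = b}` coincide with the
minimizers over `{x | |Φx| = b, ‖x‖_∞ ≤ c₀}`. -/
theorem stmt_8 {m n : ℕ} (hmn : m ≤ n) (Φ : Matrix (Fin m) (Fin n) ℝ)
    (hrank : Φ.rank = m) (b : Fin m → ℝ) (hb : ∀ j, 0 ≤ b j)
    (hne : ∃ x : Fin n → ℝ, ∀ j, |Φ.mulVec x j| = b j)
    (s : ℕ) (hs1 : 1 ≤ s) (hsm : s ≤ m)
    (hmins : ∀ x : Fin n → ℝ, (∀ j, |Φ.mulVec x j| = b j) →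
      (∀ y : Fin n → ℝ, (∀ j, |Φ.mulVec y j| = b j) → norm0 x ≤ norm0 y) → norm0 x = s)
    (c₀ : ℝ)
    (hc₀ : IsGreatest {r : ℝ | ∃ ε : Fin m → ℝ, (∀ j, ε j = 1 ∨ ε j = -1) ∧
      ∃ I : Finset (Fin n), I.card = s ∧
        LinearIndependent ℝ (fun i : ↥I => fun j : Fin m => Φ j i.val) ∧
        r = ⨆ i : ↥I, |lsVec Φ I (fun j => b j * ε j) i|} c₀) :
    (∀ x : Fin n → ℝ, (∀ j, |Φ.mulVec x j| = b j) →
      (∀ y : Fin n → ℝ, (∀ j, |Φ.mulVec y j| = b j) → norm0 x ≤ norm0 y) → ‖x‖ ≤ c₀) ∧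
    {x : Fin n → ℝ | (∀ j, |Φ.mulVec x j| = b j) ∧
        ∀ y : Fin n → ℝ, (∀ j, |Φ.mulVec y j| = b j) → norm0 x ≤ norm0 y} =
      {x : Fin n → ℝ | ((∀ j, |Φ.mulVec x j| = b j) ∧ ‖x‖ ≤ c₀) ∧
        ∀ y : Fin n → ℝ, ((∀ j, |Φ.mulVec y j| = b j) ∧ ‖y‖ ≤ c₀) →
          norm0 x ≤ norm0 y} := by
  classical
  have key : ∀ x : Fin n → ℝ, (∀ j, |Φ.mulVec x j| = b j) →
      (∀ y : Fin n → ℝ, (∀ j, |Φ.mulVec y j| = b j) → norm0 x ≤ norm0 y) → ‖x‖ ≤ c₀ := by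
    intro x hx hxmin
    set I : Finset (Fin n) := Finset.univ.filter (fun i => x i ≠ 0) with hIdef
    have hIcard : I.card = s := hmins x hx hxmin
    have hxI : ∀ k, k ∉ I → x k = 0 := by
      intro k hk
      by_contra h
      exact hk (by simp [hIdef, h])
    -- linear independence of the columns indexed by the support
    have hli : LinearIndependent ℝ (fun i : ↥I => fun j : Fin m => Φ j i.val) := by
      by_contra hdep
      obtain ⟨g, hg0, i₀, hgi₀⟩ := Fintype.not_linearIndependent_iff.mp hdep
      set z : Fin n → ℝ := fun k => if h : k ∈ I then g ⟨k, h⟩ else 0 with hzdef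
      have hzI : ∀ k, k ∉ I → z k = 0 := by intro k hk; simp [hzdef, hk]
      have hzi₀ : z i₀.val = g i₀ := by simp [hzdef, i₀.prop]
      have hzmv : Φ.mulVec z = 0 := by
        funext j
        have h0 : ∑ i : ↥I, g i * Φ j i.val = 0 := by
          have := congr_fun hg0 j
          simpa [Finset.sum_apply] using this
        have : Φ.mulVec z j = ∑ k ∈ I, Φ j k * z k := by
          rw [Matrix.mulVec, dotProduct]
          exact (Finset.sum_subset I.subset_univ (fun k _ hk => by
            rw [hzI k hk, mul_zero])).symm
        rw [this, ← Finset.sum_coe_sort I (fun k => Φ j k * z k)]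
        simp only [hzdef]
        calc (∑ i : ↥I, Φ j i.val * if h : i.val ∈ I then g ⟨i.val, h⟩ else 0)
            = ∑ i : ↥I, g i * Φ j i.val := by
              refine Finset.sum_congr rfl fun i _ => ?_
              rw [dif_pos i.prop, mul_comm]
          _ = 0 := h0
      have hxi₀ : x i₀.val ≠ 0 := (Finset.mem_filter.mp i₀.prop).2
      set t : ℝ := x i₀.val / z i₀.val with htdef
      set x' : Fin n → ℝ := x - t • z with hx'def
      have hx'c : ∀ j, |Φ.mulVec x' j| = b j := by
        intro j
        have : Φ.mulVec x' = Φ.mulVec x := by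
          rw [hx'def, Matrix.mulVec_sub, Matrix.mulVec_smul, hzmv, smul_zero, sub_zero]
        rw [this]; exact hx j
      have hzi₀ne : z i₀.val ≠ 0 := by rw [hzi₀]; exact hgi₀
      have hsupp : (Finset.univ.filter (fun k => x' k ≠ 0)) ⊆ I.erase i₀.val := by
        intro k hk
        rw [Finset.mem_filter] at hk
        rw [Finset.mem_erase]
        constructor
        · intro hki₀
          apply hk.2
          rw [hx'def, hki₀]
          simp only [Pi.sub_apply, Pi.smul_apply, smul_eq_mul, htdef]
          rw [div_mul_cancel₀ _ hzi₀ne, sub_self]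
        · by_contra hkI
          apply hk.2
          rw [hx'def]
          simp only [Pi.sub_apply, Pi.smul_apply, smul_eq_mul]
          rw [hxI k hkI, hzI k hkI, mul_zero, sub_zero]
      have hlt : norm0 x' < norm0 x := by
        have h1 : norm0 x' ≤ (I.erase i₀.val).card := Finset.card_le_card hsupp
        have h2 : (I.erase i₀.val).card < I.card :=
          Finset.card_erase_lt_of_mem i₀.prop
        have h3 : norm0 x = I.card := rfl
        omega
      exact absurd (hxmin x' hx'c) (not_le.mpr hlt)
    -- the sign vector
    set ε : Fin m → ℝ := fun j => if Φ.mulVec x j < 0 then -1 else 1 with hεdef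
    have hε : ∀ j, ε j = 1 ∨ ε j = -1 := by
      intro j; rw [hεdef]; dsimp only
      split <;> simp
    have hbε : ∀ j, b j * ε j = Φ.mulVec x j := by
      intro j
      rw [hεdef]; dsimp only
      rcases lt_or_ge (Φ.mulVec x j) 0 with h | h
      · rw [if_pos h, ← hx j, abs_of_neg h]; ring
      · rw [if_neg (not_lt.mpr h), ← hx j, abs_of_nonneg h, mul_one]
    -- the least squares vector equals x restricted to I
    set xI : ↥I → ℝ := fun i => x i.val with hxIdef
    have hAx : subCols Φ I *ᵥ xI = Φ.mulVec x := by
      funext j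
      show ∑ i : ↥I, Φ j i.val * x i.val = ∑ k : Fin n, Φ j k * x k
      rw [Finset.sum_coe_sort I (fun k => Φ j k * x k)]
      exact Finset.sum_subset I.subset_univ (fun k _ hk => by rw [hxI k hk, mul_zero])
    have hunit : IsUnit ((subCols Φ I)ᵀ * subCols Φ I) := isUnit_gram Φ I hli
    have hls : lsVec Φ I (fun j => b j * ε j) = xI := by
      have hc : (fun j => b j * ε j) = Φ.mulVec x := funext hbε
      rw [lsVec, hc, ← hAx, Matrix.mulVec_mulVec, Matrix.mulVec_mulVec,
        Matrix.mul_assoc, Matrix.nonsing_inv_mul _ ((Matrix.isUnit_iff_isUnit_det _).mp hunit),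
        Matrix.one_mulVec]
    -- membership in the set
    set r : ℝ := ⨆ i : ↥I, |lsVec Φ I (fun j => b j * ε j) i| with hrdef
    have hrmem : ∃ ε' : Fin m → ℝ, (∀ j, ε' j = 1 ∨ ε' j = -1) ∧
        ∃ I' : Finset (Fin n), I'.card = s ∧
          LinearIndependent ℝ (fun i : ↥I' => fun j : Fin m => Φ j i.val) ∧
          r = ⨆ i : ↥I', |lsVec Φ I' (fun j => b j * ε' j) i| :=
      ⟨ε, hε, I, hIcard, hli, hrdef⟩
    have hrc : r ≤ c₀ := hc₀.2 hrmem
    have hrnn : 0 ≤ r := Real.iSup_nonneg fun i => abs_nonneg _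
    have hc₀nn : 0 ≤ c₀ := hrnn.trans hrc
    rw [pi_norm_le_iff_of_nonneg hc₀nn]
    intro k
    rw [Real.norm_eq_abs]
    by_cases hk : k ∈ I
    · have : |x k| = |lsVec Φ I (fun j => b j * ε j) ⟨k, hk⟩| := by rw [hls]
      rw [this]
      have hb : BddAbove (Set.range (fun i : ↥I => |lsVec Φ I (fun j => b j * ε j) i|)) :=
        Set.Finite.bddAbove (Set.finite_range _)
      exact le_trans (le_ciSup hb (⟨k, hk⟩ : ↥I)) hrc
    · rw [hxI k hk, abs_zero]; exact hc₀nn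
  refine ⟨key, ?_⟩
  -- existence of a global minimizer
  have hex : ∃ x : Fin n → ℝ, (∀ j, |Φ.mulVec x j| = b j) ∧
      ∀ y : Fin n → ℝ, (∀ j, |Φ.mulVec y j| = b j) → norm0 x ≤ norm0 y := by
    obtain ⟨x0, hx0⟩ := hne
    have hne' : ∃ k : ℕ, ∃ x : Fin n → ℝ, (∀ j, |Φ.mulVec x j| = b j) ∧ norm0 x = k :=
      ⟨norm0 x0, x0, hx0, rfl⟩
    obtain ⟨x, hxc, hxk⟩ := Nat.find_spec hne'
    refine ⟨x, hxc, fun y hy => ?_⟩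
    rw [hxk]
    exact Nat.find_le ⟨y, hy, rfl⟩
  ext x
  simp only [Set.mem_setOf_eq]
  constructor
  · rintro ⟨hxc, hxmin⟩
    exact ⟨⟨hxc, key x hxc hxmin⟩, fun y hy => hxmin y hy.1⟩
  · rintro ⟨⟨hxc, _⟩, hxmin'⟩
    refine ⟨hxc, fun y hy => ?_⟩
    obtain ⟨z, hzc, hzmin⟩ := hex
    have hzb : ‖z‖ ≤ c₀ := key z hzc hzmin
    exact le_trans (hxmin' z ⟨hzc, hzb⟩) (hzmin y hy)
end

section
/- Let r₀ > 0. Then: (i) x* minimizes ‖x‖₀ over {x ∈ ℝ^n : |Φx| = b, ‖x‖_∞ ≤ r₀} if and only if there exists y* ∈ ℝ^n such that (x*, y*) minimizes (x,y) ↦ ‖y‖₀ over T; moreover, whenever (x*, y*) minimizes (x,y) ↦ ‖y‖₀ over T, x* minimizes ‖x‖₀ over {x : |Φx| = b, ‖x‖_∞ ≤ r₀}. (ii) For any p ∈ (0,1), the same two-way equivalence holds with ‖x‖₀ replaced by ‖x‖_p^p and ‖y‖₀ replaced by ‖y‖_p^p = ∑_{i=1}^n y_i^p. -/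
open Matrix

lemma norm0_mono {n : ℕ} {x y : Fin n → ℝ} (h : ∀ i, |x i| ≤ y i) :
    norm0 x ≤ norm0 y := by
  apply Finset.card_le_card
  intro i hi
  simp only [Finset.mem_filter, Finset.mem_univ, true_and] at hi ⊢
  intro hy
  exact hi (abs_eq_zero.mp (le_antisymm (hy ▸ h i) (abs_nonneg _)))

lemma norm0_abs {n : ℕ} (x : Fin n → ℝ) : norm0 (fun i => |x i|) = norm0 x := by
  unfold norm0
  congr 1
  ext i
  simp [abs_ne_zero]

/-- with `T = {(x,y) | |Φx| = b, ‖x‖_∞ ≤ r₀, |x| ≤ y ≤ r₀·1}`,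
(i) `x*` minimizes `‖·‖₀` over `{x | |Φx| = b, ‖x‖_∞ ≤ r₀}` iff there is `y*` with
`(x*,y*)` minimizing `(x,y) ↦ ‖y‖₀` over `T`; moreover any such `(x*,y*)` gives a
minimizer `x*`; (ii) the same with `‖·‖₀` replaced by `‖·‖_p^p`, `0 < p < 1`. -/
theorem stmt_11 {m n : ℕ} (hmn : m ≤ n) (Φ : Matrix (Fin m) (Fin n) ℝ)
    (hrank : Φ.rank = m) (b : Fin m → ℝ) (hb : ∀ j, 0 ≤ b j)
    (r₀ : ℝ) (hr₀ : 0 < r₀)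
    (T : Set ((Fin n → ℝ) × (Fin n → ℝ)))
    (hT : T = {q | (∀ j, |Φ.mulVec q.1 j| = b j) ∧ ‖q.1‖ ≤ r₀ ∧
      ∀ i, |q.1 i| ≤ q.2 i ∧ q.2 i ≤ r₀}) :
    ((∀ xs : Fin n → ℝ,
      (((∀ j, |Φ.mulVec xs j| = b j) ∧ ‖xs‖ ≤ r₀) ∧
        ∀ x : Fin n → ℝ, ((∀ j, |Φ.mulVec x j| = b j) ∧ ‖x‖ ≤ r₀) →
          norm0 xs ≤ norm0 x) ↔
      (∃ ys : Fin n → ℝ, (xs, ys) ∈ T ∧ ∀ q ∈ T, norm0 ys ≤ norm0 q.2)) ∧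
     (∀ xs ys : Fin n → ℝ, ((xs, ys) ∈ T ∧ ∀ q ∈ T, norm0 ys ≤ norm0 q.2) →
      (((∀ j, |Φ.mulVec xs j| = b j) ∧ ‖xs‖ ≤ r₀) ∧
        ∀ x : Fin n → ℝ, ((∀ j, |Φ.mulVec x j| = b j) ∧ ‖x‖ ≤ r₀) →
          norm0 xs ≤ norm0 x))) ∧
    (∀ p : ℝ, 0 < p → p < 1 →
      ((∀ xs : Fin n → ℝ,
        (((∀ j, |Φ.mulVec xs j| = b j) ∧ ‖xs‖ ≤ r₀) ∧
          ∀ x : Fin n → ℝ, ((∀ j, |Φ.mulVec x j| = b j) ∧ ‖x‖ ≤ r₀) →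
            ∑ i, |xs i| ^ p ≤ ∑ i, |x i| ^ p) ↔
        (∃ ys : Fin n → ℝ, (xs, ys) ∈ T ∧
          ∀ q ∈ T, ∑ i, ys i ^ p ≤ ∑ i, q.2 i ^ p)) ∧
       (∀ xs ys : Fin n → ℝ,
        ((xs, ys) ∈ T ∧ ∀ q ∈ T, ∑ i, ys i ^ p ≤ ∑ i, q.2 i ^ p) →
        (((∀ j, |Φ.mulVec xs j| = b j) ∧ ‖xs‖ ≤ r₀) ∧
          ∀ x : Fin n → ℝ, ((∀ j, |Φ.mulVec x j| = b j) ∧ ‖x‖ ≤ r₀) →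
            ∑ i, |xs i| ^ p ≤ ∑ i, |x i| ^ p)))) := by
  have hfeas : ∀ x : Fin n → ℝ, ‖x‖ ≤ r₀ ↔ ∀ i, |x i| ≤ r₀ := by
    intro x
    rw [pi_norm_le_iff_of_nonneg hr₀.le]
    simp [Real.norm_eq_abs]
  have habsT : ∀ x : Fin n → ℝ, ((∀ j, |Φ.mulVec x j| = b j) ∧ ‖x‖ ≤ r₀) →
      (x, fun i => |x i|) ∈ T := by
    intro x hx
    rw [hT]
    exact ⟨hx.1, hx.2, fun i => ⟨le_refl _, (hfeas x).mp hx.2 i⟩⟩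
  constructor
  · constructor
    · intro xs
      constructor
      · rintro ⟨hxs, hmin⟩
        refine ⟨fun i => |xs i|, habsT xs hxs, ?_⟩
        intro q hq
        rw [hT] at hq
        calc norm0 (fun i => |xs i|) = norm0 xs := norm0_abs xs
          _ ≤ norm0 q.1 := hmin q.1 ⟨hq.1, hq.2.1⟩
          _ ≤ norm0 q.2 := norm0_mono (fun i => (hq.2.2 i).1)
      · rintro ⟨ys, hmem, hmin⟩
        have hmem' := hmem; rw [hT] at hmem'
        refine ⟨⟨hmem'.1, hmem'.2.1⟩, ?_⟩
        intro x hx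
        calc norm0 xs ≤ norm0 ys := norm0_mono (fun i => (hmem'.2.2 i).1)
          _ ≤ norm0 (fun i => |x i|) := hmin _ (habsT x hx)
          _ = norm0 x := norm0_abs x
    · rintro xs ys ⟨hmem, hmin⟩
      have hmem' := hmem; rw [hT] at hmem'
      refine ⟨⟨hmem'.1, hmem'.2.1⟩, ?_⟩
      intro x hx
      calc norm0 xs ≤ norm0 ys := norm0_mono (fun i => (hmem'.2.2 i).1)
        _ ≤ norm0 (fun i => |x i|) := hmin _ (habsT x hx)
        _ = norm0 x := norm0_abs x
  · intro p hp hp1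
    have hmono : ∀ (x y : Fin n → ℝ), (∀ i, |x i| ≤ y i) →
        ∑ i, |x i| ^ p ≤ ∑ i, y i ^ p := by
      intro x y h
      exact Finset.sum_le_sum fun i _ =>
        Real.rpow_le_rpow (abs_nonneg _) (h i) hp.le
    constructor
    · intro xs
      constructor
      · rintro ⟨hxs, hmin⟩
        refine ⟨fun i => |xs i|, habsT xs hxs, ?_⟩
        intro q hq
        rw [hT] at hq
        calc ∑ i, |xs i| ^ p ≤ ∑ i, |q.1 i| ^ p := hmin q.1 ⟨hq.1, hq.2.1⟩
          _ ≤ ∑ i, q.2 i ^ p := hmono _ _ (fun i => (hq.2.2 i).1)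
      · rintro ⟨ys, hmem, hmin⟩
        have hmem' := hmem; rw [hT] at hmem'
        refine ⟨⟨hmem'.1, hmem'.2.1⟩, ?_⟩
        intro x hx
        calc ∑ i, |xs i| ^ p ≤ ∑ i, ys i ^ p := hmono _ _ (fun i => (hmem'.2.2 i).1)
          _ ≤ ∑ i, |x i| ^ p := hmin _ (habsT x hx)
    · rintro xs ys ⟨hmem, hmin⟩
      have hmem' := hmem; rw [hT] at hmem'
      refine ⟨⟨hmem'.1, hmem'.2.1⟩, ?_⟩
      intro x hx
      calc ∑ i, |xs i| ^ p ≤ ∑ i, ys i ^ p := hmono _ _ (fun i => (hmem'.2.2 i).1)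
        _ ≤ ∑ i, |x i| ^ p := hmin _ (habsT x hx)
end

section
/- Let r₀ > 0 be such that T is nonempty, let S := conv(T) be the convex hull of T, and let p ∈ (0,1). If (x*, y*) is an extreme point of S and (x*, y*) minimizes (x,y) ↦ ∑_{i=1}^n (y_i)^p over S, then (x*, y*) is a pseudo-extreme point of T (i.e., an extreme point of T_ε for some ε ∈ {−1,1}^m) and (x*, y*) minimizes (x,y) ↦ ∑_{i=1}^n (y_i)^p over T. -/
open Matrix

/-- The set of sign vectors `{−1,1}^m`. -/
def signs (m : ℕ) : Set (Fin m → ℝ) := {ε | ∀ j, ε j = 1 ∨ ε j = -1}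

/-- `T_ε = {(x,y) | Φx = b∘ε, |x| ≤ y, ‖x‖_∞ ≤ r₀, 0 ≤ y ≤ r₀·1}`. -/
def Teps {m n : ℕ} (Φ : Matrix (Fin m) (Fin n) ℝ) (b : Fin m → ℝ) (r₀ : ℝ)
    (ε : Fin m → ℝ) : Set ((Fin n → ℝ) × (Fin n → ℝ)) :=
  {q | Φ.mulVec q.1 = (fun j => b j * ε j) ∧ (∀ i, |q.1 i| ≤ q.2 i) ∧
    ‖q.1‖ ≤ r₀ ∧ ∀ i, 0 ≤ q.2 i ∧ q.2 i ≤ r₀}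

/-- `T = ⋃_{ε ∈ {−1,1}^m} T_ε`. -/
def TT {m n : ℕ} (Φ : Matrix (Fin m) (Fin n) ℝ) (b : Fin m → ℝ) (r₀ : ℝ) :
    Set ((Fin n → ℝ) × (Fin n → ℝ)) :=
  ⋃ ε ∈ signs m, Teps Φ b r₀ ε

/-- if `(x*,y*)` is an extreme point of `S = conv(T)` minimizing
`(x,y) ↦ ∑ (y_i)^p` over `S` (with `0 < p < 1`), then it is a pseudo-extreme point
of `T` (an extreme point of some `T_ε`) and it minimizes `(x,y) ↦ ∑ (y_i)^p`
over `T`. -/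
theorem stmt_14 {m n : ℕ} (hmn : m ≤ n) (Φ : Matrix (Fin m) (Fin n) ℝ)
    (hrank : Φ.rank = m) (b : Fin m → ℝ) (hb : ∀ j, 0 ≤ b j)
    (r₀ : ℝ) (hr₀ : 0 < r₀) (hTne : (TT Φ b r₀).Nonempty)
    (p : ℝ) (hp : 0 < p) (hp1 : p < 1)
    (q : (Fin n → ℝ) × (Fin n → ℝ))
    (hq_ext : q ∈ Set.extremePoints ℝ (convexHull ℝ (TT Φ b r₀)))
    (hq_mem : q ∈ convexHull ℝ (TT Φ b r₀))
    (hq_min : ∀ q' ∈ convexHull ℝ (TT Φ b r₀),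
      ∑ i, q.2 i ^ p ≤ ∑ i, q'.2 i ^ p) :
    (∃ ε ∈ signs m, q ∈ Set.extremePoints ℝ (Teps Φ b r₀ ε)) ∧
    q ∈ TT Φ b r₀ ∧ ∀ q' ∈ TT Φ b r₀, ∑ i, q.2 i ^ p ≤ ∑ i, q'.2 i ^ p := by
  have hqT : q ∈ TT Φ b r₀ := extremePoints_convexHull_subset hq_ext
  obtain ⟨ε, hε, hqε⟩ := Set.mem_iUnion₂.mp hqT
  refine ⟨⟨ε, hε, ?_⟩, hqT, fun q' hq' => hq_min q' (subset_convexHull ℝ _ hq')⟩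
  rw [Set.extremePoints] at hq_ext ⊢; simp only [Set.mem_setOf_eq] at hq_ext ⊢
  refine ⟨hqε, fun x₁ hx₁ x₂ hx₂ hseg => ?_⟩
  have hsub : Teps Φ b r₀ ε ⊆ convexHull ℝ (TT Φ b r₀) :=
    fun z hz => subset_convexHull ℝ _ (Set.mem_iUnion₂.mpr ⟨ε, hε, hz⟩)
  exact hq_ext.2 (hsub hx₁) (hsub hx₂) hseg
end

section
/- Let p ∈ (0,1) and r₀ > 0, and suppose x_p minimizes ‖x‖_p^p over {x ∈ ℝ^n : |Φx| = b} and satisfies ‖x_p‖_∞ ≤ r₀. Then (x_p, |x_p|) minimizes (x,y) ↦ ∑_{i=1}^n (y_i)^p over T, and (x_p, |x_p|) is a pseudo-extreme point of T; more precisely, for every ε ∈ {−1,1}^m with (x_p, |x_p|) ∈ T_ε, the point (x_p, |x_p|) is an extreme point of T_ε. -/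
open Matrix Set

/-! Every point of `T_ε` has `|Φx| = b`, so minimality of `x_p` and monotonicity of `t ↦ t ^ p`
bound `∑ yᵢ ^ p` below on `T`. If `(x_p, |x_p|)` lies in the open segment between `(u, v)` and
`(u', v')` in `T_ε`, then strict concavity of `y ↦ ∑ yᵢ ^ p` on the nonnegative orthant, together
with this lower bound at both endpoints, forces `v = v' = |x_p|`. Each coordinate of `x_p` is then
an endpoint of `[-|x_{p,i}|, |x_{p,i}|]`, an interval containing `uᵢ` and `u'ᵢ`, so `u = x_p`. -/

theorem strictConcaveOn_sum_rpow {ι : Type*} [Fintype ι] {p : ℝ} (hp₀ : 0 < p) (hp₁ : p < 1) :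
    StrictConcaveOn ℝ (Ici 0) (fun y : ι → ℝ => ∑ i, y i ^ p) := by
  refine ⟨convex_Ici 0, fun x hx y hy hxy a b ha hb hab => ?_⟩
  obtain ⟨i, hi⟩ := Function.ne_iff.1 hxy
  simp only [smul_eq_mul, Finset.mul_sum, ← Finset.sum_add_distrib, Pi.add_apply, Pi.smul_apply]
  exact Finset.sum_lt_sum
    (fun j _ => (Real.concaveOn_rpow hp₀.le hp₁.le).2 (hx j) (hy j) ha.le hb.le hab)
    ⟨i, Finset.mem_univ i, (Real.strictConcaveOn_rpow hp₀ hp₁).2 (hx i) (hy i) hi ha hb hab⟩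

theorem mem_extremePoints_Icc_neg_abs_abs (t : ℝ) :
    t ∈ extremePoints ℝ (Icc (-|t|) |t|) := by
  rw [extremePoints_Icc (neg_abs_le t |>.trans (le_abs_self t))]
  rcases abs_choice t with h | h
  · exact Or.inr h.symm
  · exact Or.inl (by linarith)

theorem mem_extremePoints_of_forall_sum_rpow_le {ι : Type*} [Fintype ι] {p : ℝ}
    (hp₀ : 0 < p) (hp₁ : p < 1) {K : Set ((ι → ℝ) × (ι → ℝ))} {x : ι → ℝ}
    (hx : (x, fun i => |x i|) ∈ K) (habs : ∀ q ∈ K, ∀ i, |q.1 i| ≤ q.2 i)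
    (hmin : ∀ q ∈ K, ∑ i, |x i| ^ p ≤ ∑ i, q.2 i ^ p) :
    (x, fun i => |x i|) ∈ K.extremePoints ℝ := by
  refine ⟨hx, ?_⟩
  rintro ⟨u, v⟩ huv ⟨u', v'⟩ huv' ⟨a, c, ha, hc, hac, hcomb⟩
  simp only [Prod.smul_mk, Prod.mk_add_mk, Prod.mk.injEq] at hcomb
  obtain ⟨hu, hv⟩ := hcomb
  have hv₀ : v ∈ Ici 0 := fun i => (abs_nonneg _).trans (habs _ huv i)
  have hv₀' : v' ∈ Ici 0 := fun i => (abs_nonneg _).trans (habs _ huv' i)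
  have hvv' : v = v' := by
    by_contra hne
    have hlt := (strictConcaveOn_sum_rpow hp₀ hp₁).2 hv₀ hv₀' hne ha hc hac
    rw [hv, smul_eq_mul, smul_eq_mul] at hlt
    set S := ∑ i, |x i| ^ p
    have hS : a * S + c * S = S := by rw [← add_mul, hac, one_mul]
    linarith [mul_le_mul_of_nonneg_left (hmin _ huv) ha.le,
      mul_le_mul_of_nonneg_left (hmin _ huv') hc.le]
  rw [← hvv', ← add_smul, hac, one_smul] at hv
  have hux : u = x := funext fun i =>
    (mem_extremePoints_Icc_neg_abs_abs (x i)).2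
      (abs_le.1 ((habs _ huv i).trans_eq (congrFun hv i)))
      (abs_le.1 ((habs _ huv' i).trans_eq (congrFun (hvv' ▸ hv) i)))
      ⟨a, c, ha, hc, hac, congrFun hu i⟩
  rw [hux, hv]

theorem abs_mulVec_eq_of_mem_TT {m n : ℕ} {Φ : Matrix (Fin m) (Fin n) ℝ} {b : Fin m → ℝ}
    (hb : ∀ j, 0 ≤ b j) {r₀ : ℝ} {q : (Fin n → ℝ) × (Fin n → ℝ)} (hq : q ∈ TT Φ b r₀) (j : Fin m) :
    |(Φ *ᵥ q.1) j| = b j := by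
  obtain ⟨ε, hε, hqε⟩ := mem_iUnion₂.1 hq
  rw [hqε.1, abs_mul, abs_of_nonneg (hb j)]
  rcases hε j with h | h <;> simp [h]

theorem exists_mem_Teps_of_abs_mulVec_eq {m n : ℕ} {Φ : Matrix (Fin m) (Fin n) ℝ}
    {b : Fin m → ℝ} {r₀ : ℝ} {x : Fin n → ℝ} (hx : ∀ j, |(Φ *ᵥ x) j| = b j) (hxr : ‖x‖ ≤ r₀) :
    ∃ ε ∈ signs m, (x, fun i => |x i|) ∈ Teps Φ b r₀ ε := by
  refine ⟨fun j => if 0 ≤ (Φ *ᵥ x) j then 1 else -1,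
    fun j => by beta_reduce; split_ifs <;> simp, ?_, fun i => le_rfl, hxr,
    fun i => ⟨abs_nonneg _, ?_⟩⟩
  · funext j
    rw [← hx j]
    beta_reduce
    split_ifs with h
    · simp [abs_of_nonneg h]
    · simp [abs_of_neg (not_le.1 h)]
  · simpa [Real.norm_eq_abs] using (norm_le_pi_norm x i).trans hxr

theorem stmt_16_general {m n : ℕ} (Φ : Matrix (Fin m) (Fin n) ℝ)
    (b : Fin m → ℝ) (hb : ∀ j, 0 ≤ b j)
    (r₀ : ℝ)
    (p : ℝ) (hp : 0 < p) (hp1 : p < 1)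
    (xp : Fin n → ℝ)
    (hxp_feas : ∀ j, |Φ.mulVec xp j| = b j)
    (hxp_min : ∀ y : Fin n → ℝ, (∀ j, |Φ.mulVec y j| = b j) →
      ∑ i, |xp i| ^ p ≤ ∑ i, |y i| ^ p)
    (hxp_bd : ‖xp‖ ≤ r₀) :
    ((xp, fun i => |xp i|) ∈ TT Φ b r₀ ∧
      ∀ q ∈ TT Φ b r₀, ∑ i, |xp i| ^ p ≤ ∑ i, q.2 i ^ p) ∧
    (∃ ε ∈ signs m, (xp, fun i => |xp i|) ∈ Set.extremePoints ℝ (Teps Φ b r₀ ε)) ∧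
    ∀ ε ∈ signs m, (xp, fun i => |xp i|) ∈ Teps Φ b r₀ ε →
      (xp, fun i => |xp i|) ∈ Set.extremePoints ℝ (Teps Φ b r₀ ε) := by
  have hmin : ∀ q ∈ TT Φ b r₀, ∑ i, |xp i| ^ p ≤ ∑ i, q.2 i ^ p := fun q hq => by
    obtain ⟨ε, -, hqε⟩ := mem_iUnion₂.1 hq
    exact (hxp_min q.1 (abs_mulVec_eq_of_mem_TT hb hq)).trans
      (Finset.sum_le_sum fun i _ => Real.rpow_le_rpow (abs_nonneg _) (hqε.2.1 i) hp.le)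
  have hext : ∀ ε ∈ signs m, (xp, fun i => |xp i|) ∈ Teps Φ b r₀ ε →
      (xp, fun i => |xp i|) ∈ extremePoints ℝ (Teps Φ b r₀ ε) := fun ε hε hmem =>
    mem_extremePoints_of_forall_sum_rpow_le hp hp1 hmem (fun q hq => hq.2.1)
      (fun q hq => hmin q (mem_biUnion hε hq))
  obtain ⟨ε₀, hε₀, hmem₀⟩ := exists_mem_Teps_of_abs_mulVec_eq hxp_feas hxp_bd
  exact ⟨⟨mem_biUnion hε₀ hmem₀, hmin⟩, ⟨ε₀, hε₀, hext ε₀ hε₀ hmem₀⟩, hext⟩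

/-- if `x_p` minimizes `‖x‖_p^p` over `{x | |Φx| = b}` (`0 < p < 1`)
and `‖x_p‖_∞ ≤ r₀`, then `(x_p, |x_p|)` minimizes `(x,y) ↦ ∑ (y_i)^p` over `T`, it
is a pseudo-extreme point of `T`, and more precisely it is an extreme point of
every `T_ε` containing it. -/
theorem stmt_16 {m n : ℕ} (hmn : m ≤ n) (Φ : Matrix (Fin m) (Fin n) ℝ)
    (hrank : Φ.rank = m) (b : Fin m → ℝ) (hb : ∀ j, 0 ≤ b j)
    (r₀ : ℝ) (hr₀ : 0 < r₀)
    (p : ℝ) (hp : 0 < p) (hp1 : p < 1)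
    (xp : Fin n → ℝ)
    (hxp_feas : ∀ j, |Φ.mulVec xp j| = b j)
    (hxp_min : ∀ y : Fin n → ℝ, (∀ j, |Φ.mulVec y j| = b j) →
      ∑ i, |xp i| ^ p ≤ ∑ i, |y i| ^ p)
    (hxp_bd : ‖xp‖ ≤ r₀) :
    ((xp, fun i => |xp i|) ∈ TT Φ b r₀ ∧
      ∀ q ∈ TT Φ b r₀, ∑ i, |xp i| ^ p ≤ ∑ i, q.2 i ^ p) ∧
    (∃ ε ∈ signs m, (xp, fun i => |xp i|) ∈ Set.extremePoints ℝ (Teps Φ b r₀ ε)) ∧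
    ∀ ε ∈ signs m, (xp, fun i => |xp i|) ∈ Teps Φ b r₀ ε →
      (xp, fun i => |xp i|) ∈ Set.extremePoints ℝ (Teps Φ b r₀ ε) :=
  stmt_16_general Φ b hb r₀ p hp hp1 xp hxp_feas hxp_min hxp_bd
end

section
/- Suppose the set {x ∈ ℝ^n : |Φx| = b} is nonempty and let s := min{‖x‖₀ : |Φx| = b} with s ≥ 1. Let r₀ > 0 be such that every minimizer of ‖x‖₀ over {x : |Φx| = b} satisfies ‖x‖_∞ ≤ r₀ and, for the given p ∈ (0,1), every minimizer of ‖x‖_p^p over {x : |Φx| = b} satisfies ‖x‖_∞ ≤ r₀. Let r_m > 0 satisfy r_m ≤ r₀ and: for every ε ∈ {−1,1}^m, every extreme point (x̃, ỹ) of T_ε, and every index k, if ỹ_k ≠ 0 then ỹ_k ≥ r_m. Then every minimizer x_p of ‖x‖_p^p over {x : |Φx| = b} satisfies ‖x_p‖₀ ≤ (r₀/r_m)^p · s. -/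
/-!
Fix an `ℓ_p` minimizer `x_p` and the sign pattern `ε` of `Φ x_p`. The point `(x_p, |x_p|)`
lies in `T_ε` and minimizes the concave function `(x, y) ↦ ∑ yᵢ ^ p` there, strictly concave in
`y`; so it is an extreme point of `T_ε` (strict concavity fixes the `y`-part of any segment
through it, and then `|x| ≤ y = |x_p|` fixes the `x`-part), and each nonzero `|x_p k|` is at
least `r_m`. Hence `r_m ^ p ‖x_p‖₀ ≤ ‖x_p‖_p^p ≤ ‖x₀‖_p^p ≤ r₀ ^ p s` for an `ℓ₀` minimizer `x₀`.
-/

open Matrix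

open Finset Set

theorem StrictConcaveOn.eq_of_mem_openSegment_of_le {E : Type*} [AddCommGroup E] [Module ℝ E]
    {s : Set E} {f : E → ℝ} (hf : StrictConcaveOn ℝ s f) {u v z : E} (hu : u ∈ s) (hv : v ∈ s)
    (hz : z ∈ openSegment ℝ u v) (hfu : f z ≤ f u) (hfv : f z ≤ f v) : u = v := by
  by_contra huv
  obtain ⟨a, c, ha, hc, hac, rfl⟩ := hz
  have hlt := hf.2 hu hv huv ha hc hac
  simp only [smul_eq_mul] at hlt
  have hsplit : f (a • u + c • v) = a * f (a • u + c • v) + c * f (a • u + c • v) := by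
    rw [← add_mul, hac, one_mul]
  linarith [mul_le_mul_of_nonneg_left hfu ha.le, mul_le_mul_of_nonneg_left hfv hc.le]

theorem StrictConcaveOn.sum_comp_apply {ι : Type*} [Fintype ι] {s : Set ℝ} {f : ℝ → ℝ}
    (hf : StrictConcaveOn ℝ s f) :
    StrictConcaveOn ℝ (Set.univ.pi fun _ : ι => s) (fun y => ∑ i, f (y i)) := by
  refine ⟨convex_pi fun _ _ => hf.1, fun y hy z hz hyz a c ha hc hac => ?_⟩
  obtain ⟨i, hi⟩ := Function.ne_iff.mp hyz
  simp only [Pi.add_apply, Pi.smul_apply, smul_eq_mul, mul_sum, ← sum_add_distrib]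
  exact sum_lt_sum (fun j _ => hf.concaveOn.2 (hy j trivial) (hz j trivial) ha.le hc.le hac)
    ⟨i, mem_univ i, hf.2 (hy i trivial) (hz i trivial) hi ha hc hac⟩

theorem eq_of_abs_le_of_combo_eq {a c u v x : ℝ} (ha : 0 < a) (hc : 0 < c) (hac : a + c = 1)
    (hu : |u| ≤ |x|) (hv : |v| ≤ |x|) (h : a * u + c * v = x) : u = x := by
  have hu2 : u ^ 2 ≤ x ^ 2 := sq_le_sq.mpr hu
  have hv2 : v ^ 2 ≤ x ^ 2 := sq_le_sq.mpr hv
  -- `a u² + c v² - (a u + c v)² = a c (u - v)²` when `a + c = 1`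
  have huv : a * c * (u - v) ^ 2 ≤ 0 := by
    have : c = 1 - a := by linarith
    subst this h
    nlinarith
  have : u = v := by
    have : (u - v) ^ 2 ≤ 0 := nonpos_of_mul_nonpos_right huv (mul_pos ha hc)
    nlinarith [sq_nonneg (u - v)]
  subst this
  linear_combination h - u * hac

theorem mk_abs_mem_extremePoints {ι : Type*} [Fintype ι] {p : ℝ} (hp : 0 < p) (hp1 : p < 1)
    {C : Set ((ι → ℝ) × (ι → ℝ))} {x : ι → ℝ} (hC : ∀ q ∈ C, |q.1| ≤ q.2) (hxC : (x, |x|) ∈ C)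
    (hmin : ∀ q ∈ C, ∑ i, |x i| ^ p ≤ ∑ i, |q.1 i| ^ p) : (x, |x|) ∈ C.extremePoints ℝ := by
  refine ⟨hxC, fun u hu v hv hseg => ?_⟩
  obtain ⟨a, c, ha, hc, hac, heq⟩ := hseg
  have hx : ∀ i, a * u.1 i + c * v.1 i = x i := fun i => by
    simpa using congrFun (congrArg Prod.fst heq) i
  have hy : a • u.2 + c • v.2 = |x| := congrArg Prod.snd heq
  have hy_nonneg : ∀ q ∈ C, q.2 ∈ Set.univ.pi fun _ => Ici 0 := fun q hq i _ =>
    (abs_nonneg _).trans (hC q hq i)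
  have hle : ∀ q ∈ C, ∑ i, |x| i ^ p ≤ ∑ i, q.2 i ^ p := fun q hq => by
    simpa using (hmin q hq).trans
      (sum_le_sum fun i _ => Real.rpow_le_rpow (abs_nonneg _) (hC q hq i) hp.le)
  have huv : u.2 = v.2 := (Real.strictConcaveOn_rpow hp hp1).sum_comp_apply
    |>.eq_of_mem_openSegment_of_le (hy_nonneg u hu) (hy_nonneg v hv) ⟨a, c, ha, hc, hac, hy⟩
      (hle u hu) (hle v hv)
  have hu2 : u.2 = |x| := by rw [← hy, ← huv, Convex.combo_self hac]
  refine Prod.ext (funext fun i => eq_of_abs_le_of_combo_eq ha hc hac ?_ ?_ (hx i)) hu2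
  · simpa [hu2] using hC u hu i
  · simpa [← huv, hu2] using hC v hv i

theorem exists_mem_signs_eq_abs_mul {m : ℕ} (w : Fin m → ℝ) :
    ∃ ε ∈ signs m, w = fun j => |w j| * ε j := by
  refine ⟨fun j => if 0 ≤ w j then 1 else -1, fun j => by beta_reduce; split_ifs <;> simp, ?_⟩
  funext j
  beta_reduce
  split_ifs with h
  · simp [abs_of_nonneg h]
  · simp [abs_of_neg (not_le.mp h)]

theorem abs_mulVec_eq_of_mem_Teps {m n : ℕ} {Φ : Matrix (Fin m) (Fin n) ℝ} {b : Fin m → ℝ}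
    (hb : ∀ j, 0 ≤ b j) {r₀ : ℝ} {ε : Fin m → ℝ} (hε : ε ∈ signs m)
    {q : (Fin n → ℝ) × (Fin n → ℝ)} (hq : q ∈ Teps Φ b r₀ ε) (j : Fin m) :
    |(Φ *ᵥ q.1) j| = b j := by
  rw [hq.1, abs_mul, abs_of_nonneg (hb j)]
  rcases hε j with h | h <;> simp [h]

theorem mk_abs_mem_Teps {m n : ℕ} {Φ : Matrix (Fin m) (Fin n) ℝ} {b : Fin m → ℝ} {r₀ : ℝ}
    {ε : Fin m → ℝ} {x : Fin n → ℝ} (hx : Φ *ᵥ x = fun j => b j * ε j) (hr : ‖x‖ ≤ r₀) :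
    (x, |x|) ∈ Teps Φ b r₀ ε := by
  refine ⟨hx, fun i => le_rfl, hr, fun i => ⟨abs_nonneg _, ?_⟩⟩
  simpa [Real.norm_eq_abs] using (norm_le_pi_norm x i).trans hr

theorem norm0_mul_rpow_le_sum_abs_rpow {n : ℕ} {x : Fin n → ℝ} {r p : ℝ} (hr : 0 ≤ r)
    (hp : 0 ≤ p) (h : ∀ i, x i ≠ 0 → r ≤ |x i|) : norm0 x * r ^ p ≤ ∑ i, |x i| ^ p :=
  calc norm0 x * r ^ p = ∑ _i ∈ univ.filter (x · ≠ 0), r ^ p := by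
        rw [sum_const, nsmul_eq_mul, norm0]
    _ ≤ ∑ i ∈ univ.filter (x · ≠ 0), |x i| ^ p :=
        sum_le_sum fun i hi => Real.rpow_le_rpow hr (h i (mem_filter.1 hi).2) hp
    _ ≤ ∑ i, |x i| ^ p :=
        sum_le_sum_of_subset_of_nonneg (filter_subset _ _) fun i _ _ => by positivity

theorem sum_abs_rpow_le_norm0_mul_rpow {n : ℕ} {x : Fin n → ℝ} {r p : ℝ} (hp : 0 < p)
    (h : ‖x‖ ≤ r) : ∑ i, |x i| ^ p ≤ norm0 x * r ^ p :=
  calc ∑ i, |x i| ^ p = ∑ i ∈ univ.filter (x · ≠ 0), |x i| ^ p :=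
        (sum_filter_of_ne (p := (x · ≠ 0)) fun i _ hi hx => hi (by simp [hx, Real.zero_rpow hp.ne'])).symm
    _ ≤ ∑ _i ∈ univ.filter (x · ≠ 0), r ^ p := sum_le_sum fun i _ =>
        Real.rpow_le_rpow (abs_nonneg _) ((norm_le_pi_norm x i).trans h) hp.le
    _ = norm0 x * r ^ p := by rw [sum_const, nsmul_eq_mul, norm0]

theorem stmt_18_general {m n : ℕ} (Φ : Matrix (Fin m) (Fin n) ℝ)
    (b : Fin m → ℝ) (hb : ∀ j, 0 ≤ b j)
    (p : ℝ) (hp : 0 < p) (hp1 : p < 1)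
    (s : ℕ)
    (hs : IsLeast {k : ℕ | ∃ x : Fin n → ℝ, (∀ j, |Φ.mulVec x j| = b j) ∧ norm0 x = k} s)
    (r₀ : ℝ) (hr₀ : 0 < r₀)
    (hbound0 : ∀ x : Fin n → ℝ, (∀ j, |Φ.mulVec x j| = b j) →
      (∀ y : Fin n → ℝ, (∀ j, |Φ.mulVec y j| = b j) → norm0 x ≤ norm0 y) → ‖x‖ ≤ r₀)
    (hboundp : ∀ x : Fin n → ℝ, (∀ j, |Φ.mulVec x j| = b j) →
      (∀ y : Fin n → ℝ, (∀ j, |Φ.mulVec y j| = b j) →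
        ∑ i, |x i| ^ p ≤ ∑ i, |y i| ^ p) → ‖x‖ ≤ r₀)
    (rm : ℝ) (hrm : 0 < rm)
    (hext : ∀ ε ∈ signs m, ∀ q ∈ Set.extremePoints ℝ (Teps Φ b r₀ ε),
      ∀ k : Fin n, q.2 k ≠ 0 → rm ≤ q.2 k) :
    ∀ xp : Fin n → ℝ, (∀ j, |Φ.mulVec xp j| = b j) →
      (∀ y : Fin n → ℝ, (∀ j, |Φ.mulVec y j| = b j) →
        ∑ i, |xp i| ^ p ≤ ∑ i, |y i| ^ p) →
      (norm0 xp : ℝ) ≤ (r₀ / rm) ^ p * s := by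
  intro xp hxp hmin
  obtain ⟨x0, hx0, hx0s⟩ := hs.1
  have hx0norm : ‖x0‖ ≤ r₀ := hbound0 x0 hx0 fun y hy => hx0s ▸ hs.2 ⟨y, hy, rfl⟩
  obtain ⟨ε, hε, hΦε⟩ := exists_mem_signs_eq_abs_mul (Φ *ᵥ xp)
  simp only [hxp] at hΦε
  have hxp_ext : (xp, |xp|) ∈ (Teps Φ b r₀ ε).extremePoints ℝ :=
    mk_abs_mem_extremePoints hp hp1 (fun q hq i => hq.2.1 i)
      (mk_abs_mem_Teps hΦε (hboundp xp hxp hmin))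
      fun q hq => hmin q.1 (abs_mulVec_eq_of_mem_Teps hb hε hq)
  have hlow : ∀ k, xp k ≠ 0 → rm ≤ |xp k| := fun k hk => by
    simpa using hext ε hε _ hxp_ext k (by simpa using hk)
  rw [Real.div_rpow hr₀.le hrm.le, div_mul_eq_mul_div, le_div_iff₀ (by positivity)]
  calc (norm0 xp : ℝ) * rm ^ p ≤ ∑ i, |xp i| ^ p :=
        norm0_mul_rpow_le_sum_abs_rpow hrm.le hp.le hlow
    _ ≤ ∑ i, |x0 i| ^ p := hmin x0 hx0
    _ ≤ norm0 x0 * r₀ ^ p := sum_abs_rpow_le_norm0_mul_rpow hp hx0norm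
    _ = r₀ ^ p * s := by rw [hx0s, mul_comm]

/-- let `s ≥ 1` be the minimum of `‖·‖₀` over the nonempty set
`{x | |Φx| = b}`, let `r₀ > 0` bound (in `‖·‖_∞`) all minimizers of `‖·‖₀` and all
minimizers of `‖·‖_p^p` over this set, and let `0 < r_m ≤ r₀` be a lower bound on the
nonzero coordinates of the `y`-part of the extreme points of every `T_ε`. Then every
minimizer `x_p` of `‖·‖_p^p` over `{x | |Φx| = b}` satisfies
`‖x_p‖₀ ≤ (r₀/r_m)^p · s`. -/
theorem stmt_18 {m n : ℕ} (hmn : m ≤ n) (Φ : Matrix (Fin m) (Fin n) ℝ)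
    (hrank : Φ.rank = m) (b : Fin m → ℝ) (hb : ∀ j, 0 ≤ b j)
    (p : ℝ) (hp : 0 < p) (hp1 : p < 1)
    (s : ℕ) (hs1 : 1 ≤ s)
    (hs : IsLeast {k : ℕ | ∃ x : Fin n → ℝ, (∀ j, |Φ.mulVec x j| = b j) ∧ norm0 x = k} s)
    (r₀ : ℝ) (hr₀ : 0 < r₀)
    (hbound0 : ∀ x : Fin n → ℝ, (∀ j, |Φ.mulVec x j| = b j) →
      (∀ y : Fin n → ℝ, (∀ j, |Φ.mulVec y j| = b j) → norm0 x ≤ norm0 y) → ‖x‖ ≤ r₀)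
    (hboundp : ∀ x : Fin n → ℝ, (∀ j, |Φ.mulVec x j| = b j) →
      (∀ y : Fin n → ℝ, (∀ j, |Φ.mulVec y j| = b j) →
        ∑ i, |x i| ^ p ≤ ∑ i, |y i| ^ p) → ‖x‖ ≤ r₀)
    (rm : ℝ) (hrm : 0 < rm) (hrmr₀ : rm ≤ r₀)
    (hext : ∀ ε ∈ signs m, ∀ q ∈ Set.extremePoints ℝ (Teps Φ b r₀ ε),
      ∀ k : Fin n, q.2 k ≠ 0 → rm ≤ q.2 k) :
    ∀ xp : Fin n → ℝ, (∀ j, |Φ.mulVec xp j| = b j) →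
      (∀ y : Fin n → ℝ, (∀ j, |Φ.mulVec y j| = b j) →
        ∑ i, |xp i| ^ p ≤ ∑ i, |y i| ^ p) →
      (norm0 xp : ℝ) ≤ (r₀ / rm) ^ p * s :=
  stmt_18_general Φ b hb p hp hp1 s hs r₀ hr₀ hbound0 hboundp rm hrm hext
end
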